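/- Any two minimal linear magic intervals must overlap: if A₁ and A₂ are contiguous intervals of qubits such that magic is extractable from A₁ (all operations outside A₁'s complement cannot affect it) and from A₂, and A₁ ∩ A₂ = ∅, then a contradiction follows, since operations supported on A₂ ⊆ complement(A₁) could extract (hence reduce) the magic, while by definition of extractability from A₁, operations on the complement of A₁ cannot reduce the magic in A₁. -/

import Mathlib

open Matrix BigOperators Finset

/-- The four single-qubit Pauli matrices `I, X, Y, Z`. -/
noncomputable def pauli1 : Fin 4 → Matrix (Fin 2) (Fin 2) ℂ :=
  ![(1 : Matrix (Fin 2) (Fin 2) ℂ),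
    !![0, 1; 1, 0],
    !![0, -Complex.I; Complex.I, 0],
    !![1, 0; 0, -1]]

/-- The `n`-qubit Pauli string `⨂ₖ pauli1 (s k)` as a matrix on `(Fin n → Fin 2)`. -/
noncomputable def pauliString {n : ℕ} (s : Fin n → Fin 4) :
    Matrix (Fin n → Fin 2) (Fin n → Fin 2) ℂ :=
  Matrix.of fun i j => ∏ k, pauli1 (s k) (i k) (j k)

/-- `M` is a Pauli operator with phase `±1`. -/
def IsPauliPM {n : ℕ} (M : Matrix (Fin n → Fin 2) (Fin n → Fin 2) ℂ) : Prop :=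
  ∃ (ε : ℂ) (s : Fin n → Fin 4), (ε = 1 ∨ ε = -1) ∧ M = ε • pauliString s

/-- `M` is a `±1`-phase Pauli operator whose support is contained in `A`. -/
def SuppIn {n : ℕ} (A : Finset (Fin n)) (M : Matrix (Fin n → Fin 2) (Fin n → Fin 2) ℂ) : Prop :=
  ∃ (ε : ℂ) (s : Fin n → Fin 4), (ε = 1 ∨ ε = -1) ∧ M = ε • pauliString s ∧
    ∀ k ∉ A, s k = 0

/-- The element `∏_{i : f i} g i` of the group generated by the (commuting) `g i`. -/
noncomputable def grpElem {n m : ℕ} (g : Fin m → Matrix (Fin n → Fin 2) (Fin n → Fin 2) ℂ)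
    (f : Fin m → Bool) : Matrix (Fin n → Fin 2) (Fin n → Fin 2) ℂ :=
  ((List.finRange m).map (fun i => if f i then g i else 1)).prod

/-- Mixed-state stabilizer 2-Rényi entropy
`M̃₂(ρ) = −log₂( Σ_P Tr(ρP)⁴ / Σ_P Tr(ρP)² )`. -/
noncomputable def sre2 {n : ℕ} (ρ : Matrix (Fin n → Fin 2) (Fin n → Fin 2) ℂ) : ℝ :=
  - Real.logb 2 (((∑ P : Fin n → Fin 4, ((ρ * pauliString P).trace) ^ 4) /
      (∑ P : Fin n → Fin 4, ((ρ * pauliString P).trace) ^ 2)).re)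

/-- The logical coset `L⟨g⟩` has a (±1-phase) representative supported inside `A`. -/
def RepOn {n m : ℕ} (g : Fin m → Matrix (Fin n → Fin 2) (Fin n → Fin 2) ℂ)
    (A : Finset (Fin n)) (L : Matrix (Fin n → Fin 2) (Fin n → Fin 2) ℂ) : Prop :=
  ∃ f : Fin m → Bool, SuppIn A (L * grpElem g f)

/-!
A representative of `X̄` supported on `A₁` and one of `Z̄` supported on `A₂` are Pauli strings
with disjoint supports, so they commute. On the other hand they differ from `X̄` and `Z̄` only by
stabilizers, which commute with everything involved, so they inherit the anticommutation of
`X̄` and `Z̄`. Two invertible operators that both commute and anticommute force `2 = 0`.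
-/

lemma pauli1_mul_self (a : Fin 4) : pauli1 a * pauli1 a = 1 := by
  fin_cases a <;>
    · ext i j
      fin_cases i <;> fin_cases j <;>
        simp [pauli1, Matrix.mul_apply, Fin.sum_univ_two, Matrix.one_apply, Complex.I_mul_I]

lemma pauliString_mul {n : ℕ} (s t : Fin n → Fin 4) :
    pauliString s * pauliString t =
      Matrix.of fun i j => ∏ k, (pauli1 (s k) * pauli1 (t k)) (i k) (j k) := by
  ext i j
  simp only [pauliString, Matrix.mul_apply, Matrix.of_apply, Fintype.prod_sum]
  exact Finset.sum_congr rfl fun x _ => Finset.prod_mul_distrib.symm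

lemma pauliString_mul_self {n : ℕ} (s : Fin n → Fin 4) :
    pauliString s * pauliString s = 1 := by
  ext i j
  simp only [pauliString_mul, Matrix.of_apply, pauli1_mul_self]
  by_cases h : i = j
  · subst h
    simp
  · obtain ⟨k, hk⟩ := Function.ne_iff.mp h
    rw [Matrix.one_apply_ne h]
    exact Finset.prod_eq_zero (Finset.mem_univ k) (Matrix.one_apply_ne hk)

lemma pauliString_commute {n : ℕ} {s t : Fin n → Fin 4} (hst : ∀ k, s k = 0 ∨ t k = 0) :
    Commute (pauliString s) (pauliString t) := by
  have hfactor : ∀ k, pauli1 (s k) * pauli1 (t k) = pauli1 (t k) * pauli1 (s k) := fun k => by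
    rcases hst k with h | h <;> simp [h, show pauli1 0 = 1 from rfl]
  simp only [Commute, SemiconjBy, pauliString_mul, hfactor]

lemma SuppIn.mul_self {n : ℕ} {A : Finset (Fin n)} {M : Matrix (Fin n → Fin 2) (Fin n → Fin 2) ℂ}
    (hM : SuppIn A M) : M * M = 1 := by
  obtain ⟨ε, s, hε, rfl, -⟩ := hM
  have hε2 : ε * ε = 1 := by rcases hε with rfl | rfl <;> norm_num
  rw [smul_mul_smul_comm, hε2, pauliString_mul_self, one_smul]

lemma SuppIn.commute_of_disjoint {n : ℕ} {A B : Finset (Fin n)}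
    {M N : Matrix (Fin n → Fin 2) (Fin n → Fin 2) ℂ} (hM : SuppIn A M) (hN : SuppIn B N)
    (hAB : Disjoint A B) : Commute M N := by
  obtain ⟨ε, s, -, rfl, hs⟩ := hM
  obtain ⟨δ, t, -, rfl, ht⟩ := hN
  refine ((pauliString_commute fun k => ?_).smul_left ε).smul_right δ
  by_cases hk : k ∈ A
  · exact Or.inr (ht k (Finset.disjoint_left.mp hAB hk))
  · exact Or.inl (hs k hk)

lemma commute_grpElem {n m : ℕ} {g : Fin m → Matrix (Fin n → Fin 2) (Fin n → Fin 2) ℂ}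
    {x : Matrix (Fin n → Fin 2) (Fin n → Fin 2) ℂ} (hx : ∀ i, Commute x (g i))
    (f : Fin m → Bool) : Commute x (grpElem g f) := by
  refine Commute.list_prod_right _ _ fun y hy => ?_
  obtain ⟨i, -, rfl⟩ := List.mem_map.mp hy
  split_ifs
  exacts [hx i, Commute.one_right x]

lemma grpElem_commute {n m : ℕ} {g : Fin m → Matrix (Fin n → Fin 2) (Fin n → Fin 2) ℂ}
    (hg : ∀ i j, Commute (g i) (g j)) (f f' : Fin m → Bool) :
    Commute (grpElem g f) (grpElem g f') :=
  commute_grpElem (fun i => (commute_grpElem (fun j => hg i j) f).symm) f'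

lemma mul_mul_anticomm_of_commute {R : Type*} [Ring R] {x z a b : R} (hxz : x * z = -(z * x))
    (hxb : Commute x b) (hza : Commute z a) (hab : Commute a b) :
    x * a * (z * b) = -(z * b * (x * a)) :=
  calc x * a * (z * b) = x * (a * z) * b := by noncomm_ring
    _ = x * z * (a * b) := by rw [← hza.eq]; noncomm_ring
    _ = -(z * (x * b) * a) := by rw [hxz, hab.eq]; noncomm_ring
    _ = -(z * b * (x * a)) := by rw [hxb.eq]; noncomm_ring

lemma two_eq_zero_of_commute_of_anticomm {R : Type*} [Ring R] {a b : R} (ha : IsUnit a)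
    (hb : IsUnit b) (hcomm : Commute a b) (hanti : a * b = -(b * a)) : (2 : R) = 0 := by
  have h : 2 * (a * b) = 0 := by
    rw [two_mul]
    nth_rewrite 2 [hanti]
    rw [← hcomm.eq, add_neg_cancel]
  exact (ha.mul hb).mul_left_eq_zero.mp h

theorem stmt_15_general {n m : ℕ}
    (g : Fin m → Matrix (Fin n → Fin 2) (Fin n → Fin 2) ℂ)
    (Xb Zb Yb : Matrix (Fin n → Fin 2) (Fin n → Fin 2) ℂ)
    (hcomm : ∀ i i', g i * g i' = g i' * g i)
    (hXcomm : ∀ i, Xb * g i = g i * Xb) (hZcomm : ∀ i, Zb * g i = g i * Zb)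
    (hanti : Xb * Zb = -(Zb * Xb))
    (A₁ A₂ : Finset (Fin n)) (hdisj : Disjoint A₁ A₂)
    (h1 : RepOn g A₁ Xb ∧ RepOn g A₁ Yb ∧ RepOn g A₁ Zb)
    (h2 : RepOn g A₂ Xb ∧ RepOn g A₂ Yb ∧ RepOn g A₂ Zb) :
    False := by
  obtain ⟨f₁, hX⟩ := h1.1
  obtain ⟨f₂, hZ⟩ := h2.2.2
  have hanti' := mul_mul_anticomm_of_commute hanti (commute_grpElem hXcomm f₂)
    (commute_grpElem hZcomm f₁) (grpElem_commute hcomm f₁ f₂)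
  have htwo := two_eq_zero_of_commute_of_anticomm (.of_mul_eq_one _ hX.mul_self)
    (.of_mul_eq_one _ hZ.mul_self) (hX.commute_of_disjoint hZ hdisj) hanti'
  simpa [Matrix.ofNat_apply] using congrFun (congrFun htwo 0) 0

/-- two minimal linear magic intervals must overlap. In the stabilizer-code
formulation, magic being extractable from an interval means all logical cosets of the
[[n,1]] code have representatives supported on it; two disjoint intervals `A₁, A₂` both
supporting all logicals are impossible, since e.g. a representative of `X̄G` on `A₁` and
one of `Z̄G` on `A₂` would anticommute while having disjoint supports. -/
theorem stmt_15 {n m : ℕ} (hnm : n = m + 1)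
    (g : Fin m → Matrix (Fin n → Fin 2) (Fin n → Fin 2) ℂ)
    (Xb Zb Yb : Matrix (Fin n → Fin 2) (Fin n → Fin 2) ℂ)
    (hg : ∀ i, IsPauliPM (g i))
    (hcomm : ∀ i i', g i * g i' = g i' * g i)
    (hXb : IsPauliPM Xb) (hZb : IsPauliPM Zb)
    (hXcomm : ∀ i, Xb * g i = g i * Xb) (hZcomm : ∀ i, Zb * g i = g i * Zb)
    (hanti : Xb * Zb = -(Zb * Xb))
    (hYb : Yb = Complex.I • (Xb * Zb))
    (A₁ A₂ : Finset (Fin n)) (hdisj : Disjoint A₁ A₂)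
    (h1 : RepOn g A₁ Xb ∧ RepOn g A₁ Yb ∧ RepOn g A₁ Zb)
    (h2 : RepOn g A₂ Xb ∧ RepOn g A₂ Yb ∧ RepOn g A₂ Zb) :
    False :=
  stmt_15_general g Xb Zb Yb hcomm hXcomm hZcomm hanti A₁ A₂ hdisj h1 h2
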